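/- arXiv:2006.07626 — 5 statements merged into one kernel-verified Lean document; each statement's English description precedes it below -/
import Mathlib

section
/- Let p ∈ [1,2] and let α ≥ 2 be an integer. For each positive integer k set j_k = α^{k(k-1)}, and define the sequence (x^{(j)})_{j≥1} in ℓ_p(ℂ) by: if j_k ≤ j ≤ 2j_k − 1 for some (necessarily unique) positive integer k, then x^{(j)} = j_k^{−(1/2 + 1/p + 1/k)} · ∑_{s=1}^{j_k} exp(2πi·rs/j_k) · e_{j_k + s − 1}, where r = j − j_k + 1; otherwise x^{(j)} = 0. Then the series ∑_j x^{(j)} is unconditionally summable in ℓ_p(ℂ) (i.e., the family (x^{(j)})_j is summable), and for every ε > 0 one has ∑_{j=1}^∞ ‖x^{(j)}‖_p^{2−ε} = ∞. -/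
open scoped ENNReal Real
open Complex Finset ComplexConjugate

/-!
On the `k`-th block `[J, 2J - 1]`, `J = α ^ (k (k - 1))`, the vectors `x⁽ʲ⁾` are
`J^{-(1/2 + 1/p + 1/k)}` times the `J` discrete Fourier characters of the block. Each character has
`ℓ_p`-norm `J^{1/p}`, so `‖x⁽ʲ⁾‖ = J^{-(1/2 + 1/k)}` and the block contributes
`J^{1 - (1/2 + 1/k)(2 - ε)} ≥ J^{ε/4}` to `∑ ‖x⁽ʲ⁾‖^{2-ε}` once `k > 8/ε`. On the other hand,
the characters are orthogonal, so by Parseval and `‖v‖_p ≤ J^{1/p - 1/2} ‖v‖_2` any sum of vectors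
of one block has norm at most `J^{-1/k} = α^{-(k-1)}`. These bounds are summable over `k`, and
the Cauchy criterion gives unconditional summability.
-/

theorem sum_Icc_exp_eq_zero_of_not_dvd {J : ℕ} {m : ℤ} (hm : ¬ (J : ℤ) ∣ m) :
    ∑ s ∈ Icc 1 J, exp (2 * π * I * m * s / J) = 0 := by
  rcases J.eq_zero_or_pos with rfl | hJ
  · simp
  have hJ' : (J : ℂ) ≠ 0 := Nat.cast_ne_zero.2 hJ.ne'
  set ζ := exp (2 * π * I * m / J)
  have hpow (s : ℕ) : exp (2 * π * I * m * s / J) = ζ ^ s := by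
    rw [← exp_nat_mul]; ring_nf
  have hζJ : ζ ^ J = 1 := by
    rw [← hpow, show 2 * π * I * m * J / J = m * (2 * π * I) by field_simp]
    exact exp_int_mul_two_pi_mul_I m
  have hζ : ζ ≠ 1 := by
    rw [Ne, exp_eq_one_iff]
    rintro ⟨n, hn⟩
    refine hm ⟨n, ?_⟩
    field_simp at hn
    exact_mod_cast hn
  calc ∑ s ∈ Icc 1 J, exp (2 * π * I * m * s / J)
      = ζ * ∑ s ∈ range J, ζ ^ s := by
        rw [← Ico_add_one_right_eq_Icc, sum_Ico_eq_sum_range, mul_sum]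
        refine sum_congr rfl fun s _ => ?_
        rw [add_comm 1, hpow, pow_succ']
    _ = 0 := by rw [geom_sum_eq hζ, hζJ]; simp

theorem sum_Icc_norm_sq_sum_exp {ι : Type*} {J : ℕ} {G : Finset ι} {r : ι → ℕ}
    (hr : ∀ j ∈ G, ∀ j' ∈ G, j ≠ j' → ¬ (J : ℤ) ∣ (r j - r j' : ℤ)) :
    ∑ s ∈ Icc 1 J, ‖∑ j ∈ G, exp (2 * π * I * r j * s / J)‖ ^ 2 = J * #G := by
  classical
  have hterm (j j' : ι) (s : ℕ) :
      exp (2 * π * I * r j * s / J) * conj (exp (2 * π * I * r j' * s / J))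
        = exp (2 * π * I * ((r j - r j' : ℤ) : ℂ) * s / J) := by
    rw [← exp_conj, ← exp_add]
    congr 1
    simp only [map_div₀, map_mul, map_ofNat, conj_ofReal, conj_I, map_natCast]
    push_cast
    ring
  have horth : ∀ j ∈ G, ∀ j' ∈ G,
      ∑ s ∈ Icc 1 J, exp (2 * π * I * ((r j - r j' : ℤ) : ℂ) * s / J)
        = if j = j' then (J : ℂ) else 0 := by
    intro j hj j' hj'
    split_ifs with h
    · simp [h]
    · exact sum_Icc_exp_eq_zero_of_not_dvd (hr j hj j' hj' h)
  apply ofReal_injective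
  push_cast
  simp_rw [← mul_conj', map_sum, sum_mul_sum, hterm]
  rw [sum_comm]
  simp_rw [sum_comm (s := Icc 1 J)]
  rw [sum_congr rfl fun j hj => sum_congr rfl fun j' hj' => horth j hj j' hj']
  simp [mul_comm]

section lp

variable {α ι E : Type*} [DecidableEq α] [NormedAddCommGroup E] {p : ℝ≥0∞} [Fact (1 ≤ p)]

theorem lp.norm_sum_single_comp_rpow (hp : 0 < p.toReal) {t : Finset ι} {e : ι → α}
    (he : Set.InjOn e t) (f : ι → E) :
    ‖∑ s ∈ t, (lp.single p (e s) (f s) : lp (fun _ : α => E) p)‖ ^ p.toReal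
      = ∑ s ∈ t, ‖f s‖ ^ p.toReal := by
  rcases isEmpty_or_nonempty ι with hι | hι
  · simp [Finset.eq_empty_of_isEmpty t, Real.zero_rpow hp.ne']
  have hinv : ∀ s ∈ t, Function.invFunOn e t (e s) = s := fun s hs => he.leftInvOn_invFunOn hs
  calc ‖∑ s ∈ t, (lp.single p (e s) (f s) : lp (fun _ : α => E) p)‖ ^ p.toReal
      = ‖∑ i ∈ t.image e, lp.single p i (f (Function.invFunOn e t i))‖ ^ p.toReal := by
        rw [sum_image he]
        congr 2
        exact sum_congr rfl fun s hs => by rw [hinv s hs]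
    _ = ∑ s ∈ t, ‖f s‖ ^ p.toReal := by
        rw [lp.norm_sum_single hp, sum_image he]
        exact sum_congr rfl fun s hs => by rw [hinv s hs]

theorem lp.norm_sum_single_comp_sq_le (hp2 : p ≤ 2) {t : Finset ι} {e : ι → α}
    (he : Set.InjOn e t) (f : ι → E) :
    ‖∑ s ∈ t, (lp.single p (e s) (f s) : lp (fun _ : α => E) p)‖ ^ 2
      ≤ (#t : ℝ) ^ (2 / p.toReal - 1) * ∑ s ∈ t, ‖f s‖ ^ 2 := by
  have hp1 : 1 ≤ p.toReal := by
    simpa using ENNReal.toReal_mono (ne_top_of_le_ne_top (by simp) hp2) (Fact.out : 1 ≤ p)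
  have hq2 : p.toReal ≤ 2 := by simpa using ENNReal.toReal_mono (by simp) hp2
  have hq0 : 0 < p.toReal := by linarith
  have hpow (a : ℝ) (ha : 0 ≤ a) : a ^ 2 = (a ^ p.toReal) ^ (2 / p.toReal) := by
    rw [← Real.rpow_mul ha, mul_div_cancel₀ _ hq0.ne', Real.rpow_two]
  rw [hpow _ (norm_nonneg _), lp.norm_sum_single_comp_rpow hq0 he,
    sum_congr rfl fun s _ => hpow _ (norm_nonneg (f s))]
  exact Real.rpow_sum_le_const_mul_sum_rpow_of_nonneg (s := t) (by rw [le_div_iff₀ hq0]; linarith)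
    fun s _ => by positivity

end lp

theorem summable_of_norm_sum_le_of_blocks {ι κ E : Type*} [NormedAddCommGroup E]
    [CompleteSpace E] {f : ι → E} {c : κ → ℝ} (hc : Summable c) (B : κ → Finset ι)
    (hB : ∀ j, f j ≠ 0 → ∃ k, j ∈ B k) (hle : ∀ k, ∀ G ⊆ B k, ‖∑ j ∈ G, f j‖ ≤ c k) :
    Summable f := by
  classical
  rcases isEmpty_or_nonempty κ with hκ | hκ
  · have hf : f = 0 := funext fun j => by_contra fun h => isEmptyElim (hB j h).choose
    exact hf ▸ summable_zero
  choose! b hb using hB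
  rw [summable_iff_vanishing_norm]
  intro ε hε
  obtain ⟨S, hS⟩ := summable_iff_vanishing_norm.mp hc ε hε
  refine ⟨S.biUnion B, fun t ht => ?_⟩
  set t' := t.filter (f · ≠ 0)
  have hblocks : Disjoint (t'.image b) S := by
    refine disjoint_left.2 fun k hk hkS => ?_
    obtain ⟨j, hj, rfl⟩ := mem_image.1 hk
    obtain ⟨hjt, hj0⟩ := mem_filter.1 hj
    exact disjoint_left.1 ht hjt (mem_biUnion.2 ⟨b j, hkS, hb j hj0⟩)
  calc ‖∑ j ∈ t, f j‖ = ‖∑ k ∈ t'.image b, ∑ j ∈ t' with b j = k, f j‖ := by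
        rw [sum_fiberwise_of_maps_to fun j hj => mem_image_of_mem b hj, sum_filter_ne_zero]
    _ ≤ ∑ k ∈ t'.image b, ‖∑ j ∈ t' with b j = k, f j‖ := norm_sum_le _ _
    _ ≤ ∑ k ∈ t'.image b, c k := sum_le_sum fun k _ => hle k _ fun j hj => by
        obtain ⟨hj', rfl⟩ := mem_filter.1 hj
        exact hb j (mem_filter.1 hj').2
    _ ≤ ‖∑ k ∈ t'.image b, c k‖ := Real.le_norm_self _
    _ < ε := hS _ hblocks

section fourierBlock

variable {p : ℝ≥0∞} [Fact (1 ≤ p)]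

noncomputable def fourierBlock (p : ℝ≥0∞) [Fact (1 ≤ p)] (J r : ℕ) : lp (fun _ : ℕ => ℂ) p :=
  ∑ s ∈ Icc 1 J, lp.single p (J + s - 1) (exp (2 * π * I * r * s / J))

theorem injOn_add_sub_one (J : ℕ) : Set.InjOn (fun s => J + s - 1) (Icc 1 J : Set ℕ) := by
  intro s hs t ht h
  simp only [coe_Icc, Set.mem_Icc] at hs ht h
  omega

theorem norm_fourierBlock (hp : p ≠ ∞) (J r : ℕ) :
    ‖fourierBlock p J r‖ = J ^ (1 / p.toReal) := by
  have hq : 0 < p.toReal := ENNReal.toReal_pos (zero_lt_one.trans_le Fact.out).ne' hp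
  have h : ‖fourierBlock p J r‖ ^ p.toReal = J := by
    rw [fourierBlock, lp.norm_sum_single_comp_rpow hq (injOn_add_sub_one J)]
    simp [norm_exp, Real.one_rpow]
  rw [← h, one_div, Real.rpow_rpow_inv (norm_nonneg _) hq.ne']

theorem norm_sum_fourierBlock_le {ι : Type*} (hp2 : p ≤ 2) {J : ℕ} {G : Finset ι}
    {r : ι → ℕ} (hr : Set.InjOn r G) (hrJ : ∀ j ∈ G, r j ∈ Icc 1 J) :
    ‖∑ j ∈ G, fourierBlock p J (r j)‖ ≤ J ^ (1 / p.toReal + 1 / 2) := by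
  have hsum : ∑ j ∈ G, fourierBlock p J (r j)
      = ∑ s ∈ Icc 1 J, lp.single p (J + s - 1) (∑ j ∈ G, exp (2 * π * I * r j * s / J)) := by
    simp_rw [fourierBlock, ← lp.singleAddMonoidHom_apply, map_sum]
    exact sum_comm
  have hcard : (#G : ℝ) ≤ J := by
    exact_mod_cast (card_le_card_of_injOn r hrJ hr).trans (by simp)
  have hdisj : ∀ j ∈ G, ∀ j' ∈ G, j ≠ j' → ¬ (J : ℤ) ∣ (r j - r j' : ℤ) := by
    intro j hj j' hj' hne hdvd
    have h1 := mem_Icc.1 (hrJ j hj)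
    have h2 := mem_Icc.1 (hrJ j' hj')
    have := Int.eq_zero_of_abs_lt_dvd hdvd (by rw [abs_lt]; omega)
    exact hne (hr hj hj' (by omega))
  have hsq :
      ‖∑ j ∈ G, fourierBlock p J (r j)‖ ^ 2 ≤ ((J : ℝ) ^ (1 / p.toReal + 1 / 2)) ^ 2 := by
    have hq : 0 < p.toReal := ENNReal.toReal_pos (zero_lt_one.trans_le Fact.out).ne'
      (ne_top_of_le_ne_top (by simp) hp2)
    calc ‖∑ j ∈ G, fourierBlock p J (r j)‖ ^ 2
        ≤ (#(Icc 1 J) : ℝ) ^ (2 / p.toReal - 1)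
            * ∑ s ∈ Icc 1 J, ‖∑ j ∈ G, exp (2 * π * I * r j * s / J)‖ ^ 2 := by
          rw [hsum]
          exact lp.norm_sum_single_comp_sq_le hp2 (injOn_add_sub_one J) _
      _ ≤ (J : ℝ) ^ (2 / p.toReal - 1) * (J * J) := by
          rw [sum_Icc_norm_sq_sum_exp hdisj, Nat.card_Icc, Nat.add_sub_cancel]
          gcongr
      _ = ((J : ℝ) ^ (1 / p.toReal + 1 / 2)) ^ 2 := by
          rw [← Real.rpow_natCast, ← Real.rpow_mul (Nat.cast_nonneg J),
            show (1 / p.toReal + 1 / 2) * ((2 : ℕ) : ℝ) = 2 / p.toReal - 1 + 2 by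
              push_cast; ring,
            Real.rpow_add' (Nat.cast_nonneg J) (by linarith [div_pos two_pos hq]),
            Real.rpow_two, sq]
  exact (pow_le_pow_iff_left₀ (norm_nonneg _) (by positivity) two_ne_zero).1 hsq

end fourierBlock

section Macphail

open Filter

variable {p : ℝ≥0∞} [Fact (1 ≤ p)] {α : ℕ}

def blockStart (α k : ℕ) : ℕ := α ^ (k * (k - 1))

def macphailBlock (α k : ℕ) : Finset ℕ := Icc (blockStart α k) (2 * blockStart α k - 1)

noncomputable def macphailVec (p : ℝ≥0∞) [Fact (1 ≤ p)] (α k j : ℕ) : lp (fun _ : ℕ => ℂ) p :=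
  ((blockStart α k : ℝ) ^ (-(1 / 2 + 1 / p.toReal + 1 / (k : ℝ)))) •
    fourierBlock p (blockStart α k) (j - blockStart α k + 1)

theorem blockStart_pos (hα : 0 < α) (k : ℕ) : 0 < blockStart α k := pow_pos hα _

theorem card_macphailBlock (hα : 0 < α) (k : ℕ) : #(macphailBlock α k) = blockStart α k := by
  have := blockStart_pos hα k
  rw [macphailBlock, Nat.card_Icc]
  omega

theorem norm_macphailVec (hp : p ≠ ∞) (hα : 0 < α) (k j : ℕ) :
    ‖macphailVec p α k j‖ = (blockStart α k : ℝ) ^ (-(1 / 2 + 1 / (k : ℝ))) := by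
  have hJ : 0 < (blockStart α k : ℝ) := Nat.cast_pos.2 (blockStart_pos hα k)
  rw [macphailVec, norm_smul, norm_fourierBlock hp, Real.norm_of_nonneg (by positivity),
    ← Real.rpow_add hJ]
  ring_nf

theorem sum_norm_macphailVec_rpow (hp : p ≠ ∞) (hα : 0 < α) (k : ℕ) (t : ℝ) :
    ∑ j ∈ macphailBlock α k, ‖macphailVec p α k j‖ ^ t
      = (blockStart α k : ℝ) ^ (1 - (1 / 2 + 1 / (k : ℝ)) * t) := by
  have hJ : 0 < (blockStart α k : ℝ) := Nat.cast_pos.2 (blockStart_pos hα k)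
  simp_rw [norm_macphailVec hp hα, sum_const, card_macphailBlock hα, nsmul_eq_mul,
    ← Real.rpow_mul hJ.le, Real.rpow_sub hJ, Real.rpow_one, neg_mul, Real.rpow_neg hJ.le,
    div_eq_mul_inv]

theorem norm_sum_macphailVec_le (hp2 : p ≤ 2) (hα : 0 < α) {k : ℕ} (hk : 0 < k)
    {G : Finset ℕ} (hG : G ⊆ macphailBlock α k) :
    ‖∑ j ∈ G, macphailVec p α k j‖ ≤ ((α : ℝ) ^ (k - 1))⁻¹ := by
  set J := blockStart α k
  have hJ : 0 < (J : ℝ) := Nat.cast_pos.2 (blockStart_pos hα k)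
  have hr : Set.InjOn (fun j => j - J + 1) G := fun j hj j' hj' h => by
    have := mem_Icc.1 (hG hj)
    have := mem_Icc.1 (hG hj')
    simp only at h
    omega
  have hrJ : ∀ j ∈ G, j - J + 1 ∈ Icc 1 J := fun j hj => by
    have := mem_Icc.1 (hG hj)
    have := blockStart_pos hα k
    simp only [mem_Icc]
    omega
  calc ‖∑ j ∈ G, macphailVec p α k j‖
      = (J : ℝ) ^ (-(1 / 2 + 1 / p.toReal + 1 / (k : ℝ)))
          * ‖∑ j ∈ G, fourierBlock p J (j - J + 1)‖ := by
        rw [← norm_smul_of_nonneg (by positivity), smul_sum]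
        rfl
    _ ≤ (J : ℝ) ^ (-(1 / 2 + 1 / p.toReal + 1 / (k : ℝ)))
          * (J : ℝ) ^ (1 / p.toReal + 1 / 2) := by
        gcongr
        exact norm_sum_fourierBlock_le hp2 hr hrJ
    _ = ((((α : ℝ) ^ (k - 1)) ^ k) ^ (-(1 / (k : ℝ)))) := by
        rw [← Real.rpow_add hJ]
        simp only [J, blockStart, Nat.cast_pow, ← pow_mul, mul_comm (k - 1) k]
        ring_nf
    _ = ((α : ℝ) ^ (k - 1))⁻¹ := by
        rw [← Real.rpow_natCast, ← Real.rpow_mul (by positivity), mul_neg, mul_one_div_cancel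
          (by exact_mod_cast hk.ne'), Real.rpow_neg_one]

theorem summable_of_eq_macphailVec (hp2 : p ≤ 2) (hα : 1 < α)
    {x : ℕ → lp (fun _ : ℕ => ℂ) p}
    (hx : ∀ k, 0 < k → ∀ j ∈ macphailBlock α k, x j = macphailVec p α k j)
    (hx0 : ∀ j, (∀ k, 0 < k → j ∉ macphailBlock α k) → x j = 0) :
    Summable x := by
  -- Blocks are indexed from `k + 1`, as `hx` only describes the blocks with `0 < k`.
  refine summable_of_norm_sum_le_of_blocks (c := fun k => ((α : ℝ) ^ k)⁻¹) ?_
    (fun k => macphailBlock α (k + 1)) (fun j hj => ?_) (fun k G hG => ?_)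
  · simpa only [inv_pow] using summable_geometric_of_lt_one (by positivity)
      (inv_lt_one_of_one_lt₀ (by exact_mod_cast hα))
  · by_contra! h
    exact hj (hx0 j fun k hk => by simpa [Nat.sub_add_cancel hk] using h (k - 1))
  · rw [sum_congr rfl fun j hj => hx (k + 1) k.succ_pos j (hG hj)]
    simpa using norm_sum_macphailVec_le hp2 (by omega) k.succ_pos hG

theorem not_summable_norm_rpow_of_eq_macphailVec (hp : p ≠ ∞) (hα : 1 < α)
    {x : ℕ → lp (fun _ : ℕ => ℂ) p}
    (hx : ∀ k, 0 < k → ∀ j ∈ macphailBlock α k, x j = macphailVec p α k j)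
    {ε : ℝ} (hε : 0 < ε) :
    ¬ Summable fun j => ‖x j‖ ^ (2 - ε) := by
  intro hS
  have hgrowth : Tendsto (fun k => (blockStart α k : ℝ) ^ (ε / 4)) atTop atTop := by
    simp only [blockStart, Nat.cast_pow]
    refine (tendsto_rpow_atTop (by positivity)).comp <|
      (tendsto_pow_atTop_atTop_of_one_lt (by exact_mod_cast hα)).comp <|
      tendsto_atTop_mono (fun k => ?_) (tendsto_sub_atTop_nat 1)
    rcases k with _ | k
    · simp
    · exact Nat.le_mul_of_pos_left _ k.succ_pos
  obtain ⟨k, hk8, hkC⟩ := ((eventually_gt_atTop ⌈8 / ε⌉₊).and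
    (hgrowth.eventually_gt_atTop (∑' j, ‖x j‖ ^ (2 - ε)))).exists
  have hk : 0 < k := by omega
  have hkε : 8 < ε * k := (div_lt_iff₀' hε).1 (Nat.lt_of_ceil_lt hk8)
  have hexp : ε / 4 ≤ 1 - (1 / 2 + 1 / (k : ℝ)) * (2 - ε) := by
    have hk' : (0 : ℝ) < k := by exact_mod_cast hk
    have : -(ε / 4) ≤ (ε - 2) / k := by rw [le_div_iff₀ hk']; nlinarith
    rw [show 1 - (1 / 2 + 1 / (k : ℝ)) * (2 - ε) = ε / 2 + (ε - 2) / k by field_simp; ring]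
    linarith
  have hblock := hS.sum_le_tsum (macphailBlock α k) fun j _ => by positivity
  rw [sum_congr rfl fun j hj => by rw [hx k hk j hj], sum_norm_macphailVec_rpow hp (by omega)]
    at hblock
  exact hkC.not_ge <| (Real.rpow_le_rpow_of_exponent_le
    (by exact_mod_cast blockStart_pos (by omega) k) hexp).trans hblock

end Macphail

/-- **Macphail-type construction in `ℓ_p(ℂ)` (Theorem 2.1).**
Let `p ∈ [1,2]` and `α ≥ 2` an integer.  With `j_k = α^{k(k-1)}`, the sequence
`x⁽ʲ⁾ = j_k^{-(1/2+1/p+1/k)} ∑_{s=1}^{j_k} exp(2πi·rs/j_k) e_{j_k+s-1}` (for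
`j_k ≤ j ≤ 2j_k - 1`, `r = j - j_k + 1`, and `0` otherwise) is unconditionally
summable in `ℓ_p(ℂ)` while `∑_j ‖x⁽ʲ⁾‖^{2-ε} = ∞` for every `ε > 0`. -/
theorem macphail_construction_complex
    (p : ℝ≥0∞) [Fact (1 ≤ p)] (hp2 : p ≤ 2)
    (α : ℕ) (hα : 2 ≤ α)
    (x : ℕ → lp (fun _ : ℕ => ℂ) p)
    (hx : ∀ k : ℕ, 0 < k → ∀ j : ℕ,
      α ^ (k * (k - 1)) ≤ j → j ≤ 2 * α ^ (k * (k - 1)) - 1 →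
      x j = ((α ^ (k * (k - 1)) : ℝ) ^ (-(1 / 2 + 1 / p.toReal + 1 / (k : ℝ)))) •
        ∑ s ∈ Finset.Icc 1 (α ^ (k * (k - 1))),
          Complex.exp (2 * Real.pi * Complex.I *
              (((j - α ^ (k * (k - 1)) + 1 : ℕ) : ℂ) * (s : ℂ)) /
                ((α : ℂ) ^ (k * (k - 1)))) •
            lp.single p (α ^ (k * (k - 1)) + s - 1) (1 : ℂ))
    (hx0 : ∀ j : ℕ,
      (¬ ∃ k : ℕ, 0 < k ∧ α ^ (k * (k - 1)) ≤ j ∧ j ≤ 2 * α ^ (k * (k - 1)) - 1) →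
      x j = 0) :
    Summable x ∧ ∀ ε : ℝ, 0 < ε → ¬ Summable (fun j : ℕ => ‖x j‖ ^ (2 - ε)) := by
  have hx' : ∀ k, 0 < k → ∀ j ∈ macphailBlock α k, x j = macphailVec p α k j := by
    intro k hk j hj
    obtain ⟨hj1, hj2⟩ := mem_Icc.1 hj
    rw [hx k hk j hj1 hj2]
    simp only [macphailVec, fourierBlock, blockStart, ← lp.single_smul, smul_eq_mul, mul_one,
      Nat.cast_pow, mul_assoc]
  have hx0' : ∀ j, (∀ k, 0 < k → j ∉ macphailBlock α k) → x j = 0 := fun j hj =>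
    hx0 j fun ⟨k, hk, hj1, hj2⟩ => hj k hk (mem_Icc.2 ⟨hj1, hj2⟩)
  exact ⟨summable_of_eq_macphailVec hp2 hα hx' hx0', fun ε hε =>
    not_summable_norm_rpow_of_eq_macphailVec (ne_top_of_le_ne_top (by simp) hp2) hα hx' hε⟩
end

section
/- Let p ∈ [1,2]. There exists a sequence (x^{(j)})_{j≥1} in the real space ℓ_p such that the series ∑_j x^{(j)} is unconditionally summable (the family is summable) and ∑_{j=1}^∞ ‖x^{(j)}‖_p^{2−ε} = ∞ for every ε > 0. -/
/-!
For `p ≤ 2`, Hölder's inequality `‖v‖_p ≤ N^{1/p - 1/2} ‖v‖_2` on `N` coordinates turns the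
orthogonality of the Rademacher functions `r_1, …, r_m` on `{0,1}^m` into the bound
`‖∑_{i ∈ s} u_i‖_p ≤ √#s` for their `ℓ_p`-normalisations `u_i`: the subsums of these unit
vectors are no larger than those of an orthonormal system. Put `4^{k²}` such vectors, scaled by
`c_k = 2^{-(k²+k)}`, into the `k`-th block. Every subsum of the `k`-th block then has norm at most
`c_k 2^{k²} = 2^{-k}`, so the Cauchy criterion gives unconditional summability, while the `k`-th
block alone contributes `4^{k²} c_k^{2-ε} = 2^{ε(k²+k) - 2k}` to `∑ ‖x_j‖^{2-ε}`.
-/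

open scoped ENNReal
open Finset

theorem Real.sum_abs_rpow_le_card_rpow_mul_sum_sq {κ : Type*} [Fintype κ] {p : ℝ} (hp : 0 < p)
    (hp2 : p ≤ 2) (v : κ → ℝ) :
    ∑ c, |v c| ^ p ≤ (Fintype.card κ : ℝ) ^ (1 - p / 2) * (∑ c, v c ^ 2) ^ (p / 2) := by
  have hHolder := Real.inner_le_weight_mul_Lp_of_nonneg univ (p := 2 / p)
    ((one_le_div hp).2 hp2) (fun _ => 1) (fun c => |v c| ^ p) (fun _ => zero_le_one)
    (fun c => by positivity)
  have hpow : ∀ c, (|v c| ^ p) ^ (2 / p) = v c ^ 2 := fun c => by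
    rw [← Real.rpow_mul (abs_nonneg _), mul_div_cancel₀ _ hp.ne', Real.rpow_two, sq_abs]
  simpa [hpow, inv_div] using hHolder

section Rademacher

variable {ι : Type*}

def rademacher (i : ι) (ω : ι → Bool) : ℝ := if ω i then -1 else 1

lemma abs_rademacher (i : ι) (ω : ι → Bool) : |rademacher i ω| = 1 := by
  unfold rademacher; split_ifs <;> norm_num

variable [Fintype ι] [DecidableEq ι]

lemma sum_rademacher_mul_rademacher_of_ne {i j : ι} (hij : i ≠ j) :
    ∑ ω, rademacher i ω * rademacher j ω = 0 := by
  -- flipping the `i`-th coordinate changes the sign of `rademacher i` only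
  set flip : (ι → Bool) → ι → Bool := fun ω => Function.update ω i (!ω i)
  have hflip : Function.Involutive flip := fun ω => by simp [flip]
  have hsign : ∀ ω, rademacher i (flip ω) * rademacher j (flip ω) =
      -(rademacher i ω * rademacher j ω) := fun ω => by
    simp only [rademacher, flip, Function.update_self, Function.update_of_ne hij.symm]
    cases ω i <;> cases ω j <;> norm_num
  have := Equiv.sum_comp (hflip.toPerm flip) fun ω => rademacher i ω * rademacher j ω
  simp only [Function.Involutive.coe_toPerm, hsign, sum_neg_distrib] at this
  linarith

lemma sum_rademacher_mul_rademacher (i j : ι) :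
    ∑ ω, rademacher i ω * rademacher j ω = if i = j then (Fintype.card (ι → Bool) : ℝ) else 0 := by
  split_ifs with h
  · subst h
    simp [← abs_mul_abs_self (rademacher i _), abs_rademacher]
  · exact sum_rademacher_mul_rademacher_of_ne h

lemma sum_sq_sum_rademacher (s : Finset ι) :
    ∑ ω, (∑ i ∈ s, rademacher i ω) ^ 2 = #s * Fintype.card (ι → Bool) := by
  calc ∑ ω, (∑ i ∈ s, rademacher i ω) ^ 2
      = ∑ i ∈ s, ∑ j ∈ s, ∑ ω, rademacher i ω * rademacher j ω := by
        simp_rw [sq, sum_mul_sum]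
        rw [sum_comm]
        exact sum_congr rfl fun i _ => sum_comm
    _ = #s * Fintype.card (ι → Bool) := by
        simp [sum_rademacher_mul_rademacher]

lemma sum_abs_sum_rademacher_rpow_le {p : ℝ} (hp : 0 < p) (hp2 : p ≤ 2) (s : Finset ι) :
    ∑ ω, |∑ i ∈ s, rademacher i ω| ^ p ≤ Fintype.card (ι → Bool) * (#s : ℝ) ^ (p / 2) := by
  set N : ℝ := (Fintype.card (ι → Bool) : ℝ)
  have hN : 0 < N := by positivity
  calc ∑ ω, |∑ i ∈ s, rademacher i ω| ^ p
      ≤ N ^ (1 - p / 2) * (#s * N) ^ (p / 2) := by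
        simpa only [sum_sq_sum_rademacher] using
          Real.sum_abs_rpow_le_card_rpow_mul_sum_sq hp hp2 fun ω => ∑ i ∈ s, rademacher i ω
    _ = N * (#s : ℝ) ^ (p / 2) := by
        rw [Real.mul_rpow (by positivity) hN.le, mul_left_comm, ← Real.rpow_add hN]
        norm_num [mul_comm]

end Rademacher

namespace lp

variable {Ω α : Type*} [Fintype Ω]

noncomputable def extendByZero (p : ℝ≥0∞) [Fact (1 ≤ p)] (g : Ω ↪ α) :
    (Ω → ℝ) →ₗ[ℝ] lp (fun _ : α => ℝ) p :=
  open Classical in ∑ ω, (lp.lsingle p (g ω)).comp (LinearMap.proj ω)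

theorem norm_extendByZero_rpow {p : ℝ≥0∞} [Fact (1 ≤ p)] (hp : 0 < p.toReal) (g : Ω ↪ α)
    (y : Ω → ℝ) :
    ‖extendByZero p g y‖ ^ p.toReal = ∑ ω, |y ω| ^ p.toReal := by
  classical
  have : extendByZero p g y = ∑ n ∈ univ.map g, lp.single p n (Function.extend g y 0 n) := by
    simp [extendByZero, g.injective.extend_apply]
  rw [this, lp.norm_sum_single hp, sum_map]
  simp [g.injective.extend_apply]

theorem exists_norm_eq_one_norm_sum_le_sqrt {p : ℝ≥0∞} [Fact (1 ≤ p)] (hp2 : p ≤ 2) (m : ℕ) :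
    ∃ u : Fin m → lp (fun _ : ℕ => ℝ) p,
      (∀ i, ‖u i‖ = 1) ∧ ∀ s : Finset (Fin m), ‖∑ i ∈ s, u i‖ ≤ √(#s : ℝ) := by
  have hr1 : 1 ≤ p.toReal := by
    simpa using ENNReal.toReal_mono (ne_top_of_le_ne_top (by simp) hp2) (Fact.out : 1 ≤ p)
  have hr2 : p.toReal ≤ 2 := ENNReal.toReal_le_of_le_ofReal zero_le_two (by simpa using hp2)
  set r := p.toReal
  have hr : 0 < r := zero_lt_one.trans_le hr1
  obtain ⟨g, hg⟩ := exists_injective_nat (Fin m → Bool)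
  set N : ℝ := (Fintype.card (Fin m → Bool) : ℝ)
  have hN : 0 < N := by positivity
  let u : Fin m → lp (fun _ : ℕ => ℝ) p := fun i =>
    extendByZero p ⟨g, hg⟩ fun ω => N ^ (-r⁻¹) * rademacher i ω
  have hnorm : ∀ s, ‖∑ i ∈ s, u i‖ ^ r = N⁻¹ * ∑ ω, |∑ i ∈ s, rademacher i ω| ^ r := by
    intro s
    rw [← map_sum, norm_extendByZero_rpow hr, mul_sum]
    refine sum_congr rfl fun ω _ => ?_
    rw [Finset.sum_apply, ← mul_sum, abs_mul, Real.mul_rpow (by positivity) (abs_nonneg _),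
      abs_of_pos (by positivity), ← Real.rpow_mul hN.le, neg_mul, inv_mul_cancel₀ hr.ne',
      Real.rpow_neg_one]
  refine ⟨u, fun i => ?_, fun s => ?_⟩
  · have := hnorm {i}
    simp only [sum_singleton, abs_rademacher, Real.one_rpow, sum_const, card_univ, nsmul_eq_mul,
      mul_one] at this
    rw [show N⁻¹ * _ = 1 from inv_mul_cancel₀ hN.ne'] at this
    rwa [← Real.one_rpow r, Real.rpow_left_inj (norm_nonneg _) zero_le_one hr.ne'] at this
  · rw [← Real.rpow_le_rpow_iff (norm_nonneg _) (Real.sqrt_nonneg _) hr, hnorm,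
      Real.sqrt_eq_rpow, ← Real.rpow_mul (Nat.cast_nonneg _), one_div_mul_eq_div,
      inv_mul_le_iff₀ hN]
    exact sum_abs_sum_rademacher_rpow_le hr hr2 s

end lp

theorem summable_sigma_of_norm_sum_le {α E : Type*} {β : α → Type*} [∀ a, Fintype (β a)]
    [NormedAddCommGroup E] [CompleteSpace E] {f : (Σ a, β a) → E} {b : α → ℝ}
    (hb : Summable b) (hf : ∀ a (s : Finset (β a)), ‖∑ i ∈ s, f ⟨a, i⟩‖ ≤ b a) :
    Summable f := by
  classical
  refine summable_iff_vanishing_norm.2 fun ε hε => ?_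
  obtain ⟨s, hs⟩ := summable_iff_vanishing_norm.1 hb ε hε
  refine ⟨s.sigma fun _ => univ, fun t ht => ?_⟩
  have hdisj : Disjoint (t.image Sigma.fst) s := by
    rw [disjoint_left]
    rintro a ha has
    obtain ⟨σ, hσ, rfl⟩ := mem_image.1 ha
    exact disjoint_left.1 ht hσ (mem_sigma.2 ⟨has, mem_univ _⟩)
  calc ‖∑ σ ∈ t, f σ‖
      = ‖∑ a ∈ t.image Sigma.fst, ∑ i ∈ t.preimage (Sigma.mk a) sigma_mk_injective.injOn,
          f ⟨a, i⟩‖ := by rw [← sum_sigma, sigma_image_fst_preimage_mk]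
    _ ≤ ∑ a ∈ t.image Sigma.fst, b a := (norm_sum_le _ _).trans (sum_le_sum fun a _ => hf a _)
    _ ≤ ‖∑ a ∈ t.image Sigma.fst, b a‖ := Real.le_norm_self _
    _ < ε := hs _ hdisj

lemma four_pow_sq_eq_two_rpow (k : ℕ) : ((4 ^ k ^ 2 : ℕ) : ℝ) = (2 : ℝ) ^ (2 * (k : ℝ) ^ 2) := by
  rw [Real.rpow_mul zero_le_two, show (2 : ℝ) ^ (2 : ℝ) = 4 by norm_num, ← Nat.cast_pow,
    Real.rpow_natCast]
  norm_cast

lemma two_rpow_neg_mul_sqrt_four_pow (k : ℕ) :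
    (2 : ℝ) ^ (-((k : ℝ) ^ 2 + k)) * √((4 ^ k ^ 2 : ℕ) : ℝ) = (1 / 2) ^ k := by
  rw [four_pow_sq_eq_two_rpow, Real.sqrt_eq_rpow, ← Real.rpow_mul zero_le_two,
    ← Real.rpow_add two_pos]
  rw [show -((k : ℝ) ^ 2 + k) + 2 * (k : ℝ) ^ 2 * (1 / 2) = -k by ring, Real.rpow_neg zero_le_two,
    Real.rpow_natCast, one_div, inv_pow]

lemma not_bddAbove_four_pow_mul_two_rpow {ε : ℝ} (hε : 0 < ε) :
    ¬BddAbove (Set.range fun k : ℕ => ((4 ^ k ^ 2 : ℕ) : ℝ) *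
      ((2 : ℝ) ^ (-((k : ℝ) ^ 2 + k))) ^ (2 - ε)) := by
  rintro ⟨C, hC⟩
  obtain ⟨k, hk⟩ := exists_nat_ge (max (3 / ε) C)
  have hkε : 3 ≤ k * ε := (div_le_iff₀ hε).1 ((le_max_left _ _).trans hk)
  have hexp : (k : ℝ) ≤ 2 * (k : ℝ) ^ 2 + -((k : ℝ) ^ 2 + k) * (2 - ε) := by
    nlinarith [(Nat.cast_nonneg k : (0 : ℝ) ≤ k)]
  have : _ ≤ C := hC ⟨k, rfl⟩
  dsimp only at this
  rw [four_pow_sq_eq_two_rpow, ← Real.rpow_mul zero_le_two, ← Real.rpow_add two_pos] at this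
  have h2k : (k : ℝ) < 2 ^ (k : ℝ) := by
    rw [Real.rpow_natCast]; exact_mod_cast Nat.lt_two_pow_self
  linarith [(le_max_right _ _).trans hk, Real.rpow_le_rpow_of_exponent_le one_le_two hexp]

section Blocks

variable {E : Type*} [NormedAddCommGroup E] [NormedSpace ℝ E] [CompleteSpace E]

theorem exists_summable_not_rpow_summable_of_blocks {m : ℕ → ℕ} {c : ℕ → ℝ}
    (hm : ∀ k, m k ≠ 0) (hc : ∀ k, 0 < c k) (hsum : Summable fun k => c k * √(m k : ℝ))
    (hdiv : ∀ ε : ℝ, 0 < ε → ¬BddAbove (Set.range fun k => (m k : ℝ) * c k ^ (2 - ε)))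
    (u : ∀ k, Fin (m k) → E) (hu : ∀ k i, ‖u k i‖ = 1)
    (hsqrt : ∀ k (s : Finset (Fin (m k))), ‖∑ i ∈ s, u k i‖ ≤ √(#s : ℝ)) :
    ∃ x : ℕ → E, Summable x ∧ ∀ ε : ℝ, 0 < ε → ¬Summable (fun j => ‖x j‖ ^ (2 - ε)) := by
  let f : (Σ k, Fin (m k)) → E := fun σ => c σ.1 • u σ.1 σ.2
  have hnorm : ∀ σ, ‖f σ‖ = c σ.1 := fun σ => by
    simp [f, norm_smul, hu, abs_of_pos (hc _)]
  have hf : Summable f := by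
    refine summable_sigma_of_norm_sum_le hsum fun k s => ?_
    change ‖∑ i ∈ s, c k • u k i‖ ≤ _
    rw [← smul_sum, norm_smul, Real.norm_of_nonneg (hc k).le]
    have hs : (#s : ℝ) ≤ m k := mod_cast (card_le_univ s).trans_eq (Fintype.card_fin _)
    exact mul_le_mul_of_nonneg_left ((hsqrt k s).trans (Real.sqrt_le_sqrt hs)) (hc k).le
  have : ∀ k, NeZero (m k) := fun k => ⟨hm k⟩
  obtain ⟨e⟩ := nonempty_equiv_of_countable (α := ℕ) (β := Σ k, Fin (m k))
  refine ⟨f ∘ e, e.summable_iff.2 hf, fun ε hε hq => hdiv ε hε ⟨∑' σ, ‖f σ‖ ^ (2 - ε), ?_⟩⟩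
  rintro _ ⟨k, rfl⟩
  replace hq := (e.summable_iff (f := fun σ => ‖f σ‖ ^ (2 - ε))).1 hq
  calc (m k : ℝ) * c k ^ (2 - ε) = ∑ i : Fin (m k), ‖f ⟨k, i⟩‖ ^ (2 - ε) := by simp [hnorm]
    _ = ∑ σ ∈ univ.map (Function.Embedding.sigmaMk k), ‖f σ‖ ^ (2 - ε) := by
        rw [sum_map]; rfl
    _ ≤ ∑' σ, ‖f σ‖ ^ (2 - ε) := hq.sum_le_tsum _ fun _ _ => by positivity

theorem exists_summable_not_rpow_summable_of_norm_sum_le_sqrt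
    (h : ∀ m : ℕ, ∃ u : Fin m → E,
      (∀ i, ‖u i‖ = 1) ∧ ∀ s : Finset (Fin m), ‖∑ i ∈ s, u i‖ ≤ √(#s : ℝ)) :
    ∃ x : ℕ → E, Summable x ∧ ∀ ε : ℝ, 0 < ε → ¬Summable (fun j => ‖x j‖ ^ (2 - ε)) := by
  choose u hu hsqrt using fun k : ℕ => h (4 ^ k ^ 2)
  refine exists_summable_not_rpow_summable_of_blocks (fun k => by positivity)
    (fun k => by positivity) ?_ (fun ε hε => not_bddAbove_four_pow_mul_two_rpow hε) u hu hsqrt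
  simpa only [two_rpow_neg_mul_sqrt_four_pow] using summable_geometric_two

end Blocks

/-- **Dvoretzky–Rogers-type statement for the real space `ℓ_p`, `1 ≤ p ≤ 2`.**
There is an unconditionally summable sequence `(x⁽ʲ⁾)` in `ℓ_p(ℝ)` with
`∑_j ‖x⁽ʲ⁾‖^{2-ε} = ∞` for every `ε > 0`. -/
theorem exists_summable_not_rpow_summable_real
    (p : ℝ≥0∞) [Fact (1 ≤ p)] (hp2 : p ≤ 2) :
    ∃ x : ℕ → lp (fun _ : ℕ => ℝ) p,
      Summable x ∧ ∀ ε : ℝ, 0 < ε → ¬ Summable (fun j : ℕ => ‖x j‖ ^ (2 - ε)) :=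
  exists_summable_not_rpow_summable_of_norm_sum_le_sqrt
    (lp.exists_norm_eq_one_norm_sum_le_sqrt hp2)
end

section
/- Let p ∈ [1,2] and let p* be its conjugate exponent (1/p + 1/p* = 1). For every positive integer n, let a_{rs} = exp(2πi·rs/n) for 1 ≤ r,s ≤ n. Then for all vectors y = (y_1,…,y_n) ∈ ℂ^n with (∑_{r=1}^n |y_r|^{p*})^{1/p*} ≤ 1 and z = (z_1,…,z_n) ∈ ℂ^n with max_s |z_s| ≤ 1, one has |∑_{r=1}^{n} ∑_{s=1}^{n} a_{rs}·y_r·z_s| ≤ n^{1/2 + 1/p}. -/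
/-!
The matrix `a` is `√n` times a unitary matrix (orthogonality of the additive characters of
`ℤ/nℤ`), so `w = a z` has `‖w‖₂ = √n ‖z‖₂ ≤ n`. Hölder's inequality bounds the bilinear form by
`‖y‖_{p*} ‖w‖_p ≤ ‖w‖_p`, and since `p ≤ 2` the power mean inequality on `n` points gives
`‖w‖_p ≤ n^{1/p - 1/2} ‖w‖₂`.
-/

open Finset Matrix WithLp
open scoped ENNReal Real InnerProductSpace

theorem PiLp.norm_sum_mul_le {ι 𝕜 : Type*} [Fintype ι] [RCLike 𝕜] {p q : ℝ≥0∞}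
    [hpq : p.HolderConjugate q] (x : PiLp p (fun _ : ι => 𝕜)) (y : PiLp q (fun _ : ι => 𝕜)) :
    ‖∑ i, x i * y i‖ ≤ ‖x‖ * ‖y‖ := by
  have : Fact (1 ≤ p) := ⟨hpq.one_le⟩
  have : Fact (1 ≤ q) := ⟨hpq.symm.one_le⟩
  let B : ι → 𝕜 →L[𝕜] 𝕜 →L[𝕜] 𝕜 := fun _ => ContinuousLinearMap.mul 𝕜 𝕜
  have hB : ∀ i, ‖B i‖ ≤ ((1 : NNReal) : ℝ) := fun _ =>
    (ContinuousLinearMap.opNorm_mul_le 𝕜 𝕜).trans_eq NNReal.coe_one.symm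
  let x' : lp (fun _ : ι => 𝕜) p := (lpPiLpₗᵢ _ 𝕜).symm x
  let y' : lp (fun _ : ι => 𝕜) q := (lpPiLpₗᵢ _ 𝕜).symm y
  calc ‖∑ i, x i * y i‖ = ‖lp.dualPairing p q B hB x' y'‖ := by
        rw [lp.dualPairing_apply, tsum_fintype]; rfl
    _ ≤ ‖lp.dualPairing p q B hB‖ * ‖x'‖ * ‖y'‖ := (lp.dualPairing p q B hB).le_opNorm₂ x' y'
    _ ≤ 1 * ‖x'‖ * ‖y'‖ := by gcongr; exact lp.norm_dualPairing B hB
    _ = ‖x‖ * ‖y‖ := by simp [x', y']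

theorem PiLp.norm_toLp_le_card_rpow_mul_norm_toLp {ι : Type*} [Fintype ι] {β : ι → Type*}
    [∀ i, SeminormedAddCommGroup (β i)] {p r : ℝ≥0∞} (hp : 0 < p) (hpr : p ≤ r) (hr : r ≠ ∞)
    (x : ∀ i, β i) :
    ‖toLp p x‖ ≤ (Fintype.card ι : ℝ) ^ (1 / p.toReal - 1 / r.toReal) * ‖toLp r x‖ := by
  have ht : 0 < p.toReal := ENNReal.toReal_pos hp.ne' (ne_top_of_le_ne_top hr hpr)
  have htu : p.toReal ≤ r.toReal := ENNReal.toReal_mono hr hpr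
  have hu : 0 < r.toReal := ht.trans_le htu
  set t := p.toReal
  set u := r.toReal
  have hpow : ∀ i, (‖x i‖ ^ t) ^ (u / t) = ‖x i‖ ^ u := fun i => by
    rw [← Real.rpow_mul (norm_nonneg _), mul_div_cancel₀ _ ht.ne']
  have hmean :
      (∑ i, ‖x i‖ ^ t) ^ (u / t) ≤ (Fintype.card ι : ℝ) ^ (u / t - 1) * ∑ i, ‖x i‖ ^ u := by
    simpa only [hpow, card_univ] using Real.rpow_sum_le_const_mul_sum_rpow_of_nonneg (s := univ)
      (f := fun i => ‖x i‖ ^ t) ((one_le_div ht).2 htu) (fun i _ => by positivity)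
  rw [PiLp.norm_eq_sum ht, PiLp.norm_eq_sum hu]
  calc (∑ i, ‖x i‖ ^ t) ^ (1 / t) = ((∑ i, ‖x i‖ ^ t) ^ (u / t)) ^ (1 / u) := by
        rw [← Real.rpow_mul (by positivity)]; congr 1; field_simp
    _ ≤ ((Fintype.card ι : ℝ) ^ (u / t - 1) * ∑ i, ‖x i‖ ^ u) ^ (1 / u) := by gcongr
    _ = _ := by
        rw [Real.mul_rpow (by positivity) (by positivity), ← Real.rpow_mul (by positivity)]
        congr 2; field_simp

theorem Matrix.norm_toLp_mulVec_sq_of_conjTranspose_mul_self {𝕜 m n : Type*} [RCLike 𝕜]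
    [Fintype m] [Fintype n] [DecidableEq n] {A : Matrix m n 𝕜} {c : ℝ}
    (hA : Aᴴ * A = (c : 𝕜) • 1) (x : n → 𝕜) :
    ‖toLp 2 (A *ᵥ x)‖ ^ 2 = c * ‖toLp 2 x‖ ^ 2 := by
  have hinner : ⟪toLp 2 (A *ᵥ x), toLp 2 (A *ᵥ x)⟫_𝕜 = (c : 𝕜) * ⟪toLp 2 x, toLp 2 x⟫_𝕜 := by
    rw [EuclideanSpace.inner_toLp_toLp, EuclideanSpace.inner_toLp_toLp, star_mulVec,
      dotProduct_comm, dotProduct_mulVec, vecMul_vecMul, hA, vecMul_smul, vecMul_one,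
      smul_dotProduct, smul_eq_mul, dotProduct_comm]
  rw [@norm_sq_eq_re_inner 𝕜, @norm_sq_eq_re_inner 𝕜, hinner, RCLike.re_ofReal_mul]

lemma ZMod.natCast_finVal_injective (n : ℕ) :
    Function.Injective fun r : Fin n => ((r : ℕ) : ZMod n) := fun r r' h => Fin.ext <| by
  simpa [ZMod.val_natCast_of_lt r.2, ZMod.val_natCast_of_lt r'.2] using congrArg ZMod.val h

lemma ZMod.sum_fin_stdAddChar_succ_mul (n : ℕ) [NeZero n] (d : ZMod n) :
    ∑ r : Fin n, stdAddChar ((((r : ℕ) : ZMod n) + 1) * d) = if d = 0 then (n : ℂ) else 0 := by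
  have hbij : Function.Bijective fun r : Fin n => ((r : ℕ) : ZMod n) + 1 :=
    (Fintype.bijective_iff_injective_and_card _).2
      ⟨(add_left_injective 1).comp (natCast_finVal_injective n), by simp⟩
  rw [Fintype.sum_bijective _ hbij _ (fun x => stdAddChar (x * d)) fun _ => rfl,
    AddChar.sum_mulShift d (isPrimitive_stdAddChar n), card, Nat.cast_ite, Nat.cast_zero]

noncomputable def fourierMatrix (n : ℕ) : Matrix (Fin n) (Fin n) ℂ :=
  of fun r s => Complex.exp (2 * π * Complex.I * (((r : ℕ) + 1) * ((s : ℕ) + 1)) / n)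

lemma fourierMatrix_apply_eq_stdAddChar {n : ℕ} [NeZero n] (r s : Fin n) :
    fourierMatrix n r s =
      ZMod.stdAddChar ((((r : ℕ) : ZMod n) + 1) * (((s : ℕ) : ZMod n) + 1)) := by
  rw [ZMod.stdAddChar_apply, ← Nat.cast_succ, ← Nat.cast_succ, ← Nat.cast_mul,
    ZMod.toCircle_natCast]
  simp [fourierMatrix]

lemma fourierMatrix_conjTranspose_mul_self (n : ℕ) :
    (fourierMatrix n)ᴴ * fourierMatrix n = (n : ℂ) • 1 := by
  ext s u
  have : NeZero n := ⟨s.pos.ne'⟩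
  have hsu : (((u : ℕ) : ZMod n) + 1) - (((s : ℕ) : ZMod n) + 1) = 0 ↔ s = u := by
    rw [sub_eq_zero, add_left_inj, eq_comm]
    exact (ZMod.natCast_finVal_injective n).eq_iff
  simp only [mul_apply, conjTranspose_apply, fourierMatrix_apply_eq_stdAddChar, RCLike.star_def,
    ← AddChar.map_neg_eq_conj, ← AddChar.map_add_eq_mul, ← mul_neg, ← mul_add, neg_add_eq_sub,
    ZMod.sum_fin_stdAddChar_succ_mul, hsu, Matrix.smul_apply, one_apply, smul_eq_mul, mul_ite,
    mul_one, mul_zero]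

lemma norm_toLp_fourierMatrix_mulVec_le {n : ℕ} {z : Fin n → ℂ} (hz : ∀ s, ‖z s‖ ≤ 1) :
    ‖toLp 2 (fourierMatrix n *ᵥ z)‖ ≤ n := by
  have hz2 : ‖toLp 2 z‖ ^ 2 ≤ n := by
    rw [EuclideanSpace.norm_sq_eq]
    calc ∑ s, ‖z s‖ ^ 2 ≤ ∑ _s : Fin n, (1 : ℝ) :=
          sum_le_sum fun s _ => pow_le_one₀ (norm_nonneg _) (hz s)
      _ = n := by simp
  have hparseval := norm_toLp_mulVec_sq_of_conjTranspose_mul_self (c := n)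
    (by simpa only [RCLike.ofReal_natCast] using fourierMatrix_conjTranspose_mul_self n) z
  refine (pow_le_pow_iff_left₀ (norm_nonneg _) n.cast_nonneg two_ne_zero).1 ?_
  rw [hparseval, sq (n : ℝ)]
  gcongr

theorem fourier_matrix_bilinear_bound_general
    (p q : ℝ≥0∞) (hp2 : p ≤ 2) (hpq : 1 / p + 1 / q = 1)
    (n : ℕ)
    (y : PiLp q (fun _ : Fin n => ℂ)) (hy : ‖y‖ ≤ 1)
    (z : Fin n → ℂ) (hz : ∀ s, ‖z s‖ ≤ 1) :
    ‖∑ r : Fin n, ∑ s : Fin n,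
        Complex.exp (2 * Real.pi * Complex.I *
            (((r : ℕ) + 1) * ((s : ℕ) + 1)) / n) * y r * z s‖ ≤
      (n : ℝ) ^ ((1 : ℝ) / 2 + 1 / p.toReal) := by
  have : q.HolderConjugate p := ENNReal.holderConjugate_iff.2 (by simpa [add_comm] using hpq)
  have : Fact (1 ≤ p) := ⟨ENNReal.HolderConjugate.one_le p q⟩
  have hexp : 1 / p.toReal - 1 / 2 + 1 = 1 / 2 + 1 / p.toReal := by ring
  set w := fourierMatrix n *ᵥ z
  have hsum : ∑ r : Fin n, ∑ s : Fin n, Complex.exp (2 * Real.pi * Complex.I *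
      (((r : ℕ) + 1) * ((s : ℕ) + 1)) / n) * y r * z s = ∑ r, y r * toLp p w r := by
    simp only [w, mulVec, dotProduct, fourierMatrix, of_apply, mul_sum]
    exact sum_congr rfl fun r _ => sum_congr rfl fun s _ => by ring
  calc _ = ‖∑ r, y r * toLp p w r‖ := by rw [hsum]
    _ ≤ ‖y‖ * ‖toLp p w‖ := PiLp.norm_sum_mul_le y _
    _ ≤ ‖toLp p w‖ := mul_le_of_le_one_left (norm_nonneg _) hy
    _ ≤ (n : ℝ) ^ (1 / p.toReal - 1 / 2) * ‖toLp 2 w‖ := by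
        simpa using PiLp.norm_toLp_le_card_rpow_mul_norm_toLp
          (ENNReal.HolderConjugate.pos p q) hp2 ENNReal.ofNat_ne_top w
    _ ≤ (n : ℝ) ^ (1 / p.toReal - 1 / 2) * n := by
        gcongr; exact norm_toLp_fourierMatrix_mulVec_le hz
    _ = (n : ℝ) ^ ((1 : ℝ) / 2 + 1 / p.toReal) := by
        rw [← Real.rpow_add_one' n.cast_nonneg (by rw [hexp]; positivity), hexp]

/-- **Bilinear bound (2.3) for the Fourier/Toeplitz matrix.**
Let `1 ≤ p ≤ 2` with conjugate exponent `q` (`1/p + 1/q = 1`), and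
`a_{rs} = exp(2πi·rs/n)`.  For `y` in the unit ball of `ℓ_q^n(ℂ)` and
`z` with `|z_s| ≤ 1` for every `s`, one has
`|∑_{r,s} a_{rs} y_r z_s| ≤ n^{1/2 + 1/p}`. -/
theorem fourier_matrix_bilinear_bound
    (p q : ℝ≥0∞) (hp1 : 1 ≤ p) (hp2 : p ≤ 2) (hpq : 1 / p + 1 / q = 1)
    (n : ℕ) (hn : 0 < n)
    (y : PiLp q (fun _ : Fin n => ℂ)) (hy : ‖y‖ ≤ 1)
    (z : Fin n → ℂ) (hz : ∀ s, ‖z s‖ ≤ 1) :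
    ‖∑ r : Fin n, ∑ s : Fin n,
        Complex.exp (2 * Real.pi * Complex.I *
            (((r : ℕ) + 1) * ((s : ℕ) + 1)) / n) * y r * z s‖ ≤
      (n : ℝ) ^ ((1 : ℝ) / 2 + 1 / p.toReal) :=
  fourier_matrix_bilinear_bound_general p q hp2 hpq n y hy z hz
end

section
/- Let p ∈ [1,2] and let α ≥ 2 be an integer. For each positive integer k set j_k = α^{k(k-1)}, and for j_k ≤ j ≤ 2j_k − 1 define x^{(j)} = j_k^{−(1/2 + 1/p + 1/k)} · ∑_{s=1}^{j_k} exp(2πi·rs/j_k) · e_{j_k + s − 1} ∈ ℓ_p(ℂ), where r = j − j_k + 1. Then for every positive integer k and every continuous linear functional φ on ℓ_p(ℂ) with ‖φ‖ ≤ 1, one has ∑_{j=j_k}^{2j_k − 1} |φ(x^{(j)})| ≤ α^{1−k}. -/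
open scoped ENNReal Real ComplexConjugate
open Complex Finset

/-!
Write `bₙ = φ(eₙ)`. Up to the factor `j_k^{-(1/2+1/p+1/k)}`, the numbers `φ(x⁽ʲ⁾)` form the
discrete Fourier transform of the block `(b_{j_k+s-1})_{1 ≤ s ≤ j_k}`, so by Cauchy–Schwarz and
Parseval their absolute values sum to at most `j_k` times the `ℓ₂`-norm of the block. Testing `φ`
against `∑ conj(bₙ) eₙ` and comparing the `ℓ_p`- and `ℓ₂`-norms on `j_k` coordinates (this is
where `p ≤ 2` enters) bounds that `ℓ₂`-norm by `j_k^{1/p-1/2}`. The total is at most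
`j_k^{-1/k} = α^{1-k}`.
-/

lemma sum_Icc_one_pow_eq_zero {R : Type*} [CommRing R] [IsDomain R] {w : R} {n : ℕ}
    (hwn : w ^ n = 1) (hw : w ≠ 1) : ∑ r ∈ Icc 1 n, w ^ r = 0 := by
  have hgeom : ∑ r ∈ range n, w ^ r = 0 := by
    have h := geom_sum_mul w n
    rw [hwn, sub_self] at h
    exact (mul_eq_zero.mp h).resolve_right (sub_ne_zero.mpr hw)
  rw [← Ico_add_one_right_eq_Icc, sum_Ico_eq_sum_range, Nat.add_sub_cancel]
  simp_rw [pow_add, pow_one, ← mul_sum, hgeom, mul_zero]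

lemma exp_mul_conj_exp (J r s t : ℕ) :
    exp (2 * π * I * (r * s) / J) * conj (exp (2 * π * I * (r * t) / J)) =
      exp (2 * π * I * ((s : ℂ) - t) / J) ^ r := by
  rw [← exp_conj, ← exp_add, ← exp_nat_mul]
  congr 1
  simp only [map_div₀, map_mul, conj_I, conj_ofReal, map_natCast, map_ofNat]
  ring

lemma exp_two_pi_I_sub_div_ne_one {J s t : ℕ} (hs : s ∈ Icc 1 J) (ht : t ∈ Icc 1 J)
    (hst : s ≠ t) : exp (2 * π * I * ((s : ℂ) - t) / J) ≠ 1 := by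
  rw [Ne, exp_eq_one_iff]
  rintro ⟨n, hn⟩
  simp only [mem_Icc] at hs ht
  have hJ : (J : ℂ) ≠ 0 := by norm_cast; omega
  have hdiff : (s : ℤ) - (t : ℤ) = n * (J : ℤ) := by
    have h2πI : 2 * π * I ≠ 0 := by simp [Real.pi_ne_zero, I_ne_zero]
    rw [div_eq_iff hJ] at hn
    have h : 2 * π * I * ((s : ℂ) - t) = 2 * π * I * (n * J) := by linear_combination hn
    exact_mod_cast mul_left_cancel₀ h2πI h
  have := Int.eq_zero_of_abs_lt_dvd (m := J) (x := (s : ℤ) - t) ⟨n, by rw [hdiff, mul_comm]⟩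
    (by rw [abs_sub_lt_iff]; omega)
  omega

lemma sum_exp_mul_conj_exp {J s t : ℕ} (hs : s ∈ Icc 1 J) (ht : t ∈ Icc 1 J) :
    ∑ r ∈ Icc 1 J, exp (2 * π * I * (r * s) / J) * conj (exp (2 * π * I * (r * t) / J)) =
      if s = t then (J : ℂ) else 0 := by
  simp_rw [exp_mul_conj_exp]
  split_ifs with hst
  · simp [hst]
  · refine sum_Icc_one_pow_eq_zero ?_ (exp_two_pi_I_sub_div_ne_one hs ht hst)
    have hJ : (J : ℂ) ≠ 0 := by simp only [mem_Icc] at hs; norm_cast; omega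
    rw [← exp_nat_mul, mul_div_cancel₀ _ hJ, ← Int.cast_natCast s, ← Int.cast_natCast t,
      ← Int.cast_sub, mul_comm, exp_int_mul_two_pi_mul_I]

lemma sum_norm_sq_sum_mul_of_orthogonal {κ ι : Type*} [DecidableEq ι] (R : Finset κ)
    (S : Finset ι) (e : κ → ι → ℂ) (c : ℝ)
    (horth : ∀ s ∈ S, ∀ t ∈ S, ∑ r ∈ R, e r s * conj (e r t) = if s = t then (c : ℂ) else 0)
    (b : ι → ℂ) :
    ∑ r ∈ R, ‖∑ s ∈ S, e r s * b s‖ ^ 2 = c * ∑ s ∈ S, ‖b s‖ ^ 2 := by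
  apply ofReal_injective
  push_cast
  simp_rw [← mul_conj']
  calc ∑ r ∈ R, (∑ s ∈ S, e r s * b s) * conj (∑ t ∈ S, e r t * b t)
      = ∑ s ∈ S, ∑ t ∈ S, b s * conj (b t) * ∑ r ∈ R, e r s * conj (e r t) := by
        simp_rw [map_sum, sum_mul_sum, mul_sum]
        rw [sum_comm]
        refine sum_congr rfl fun s _ => ?_
        rw [sum_comm]
        refine sum_congr rfl fun t _ => sum_congr rfl fun r _ => ?_
        rw [map_mul]
        ring
    _ = ∑ s ∈ S, b s * conj (b s) * c := by
        refine sum_congr rfl fun s hs => ?_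
        rw [sum_congr rfl fun t ht => by rw [horth s hs t ht]]
        simp [hs]
    _ = c * ∑ s ∈ S, b s * conj (b s) := by rw [mul_sum]; simp_rw [mul_comm]

lemma sum_norm_sum_exp_mul_le (J : ℕ) (b : ℕ → ℂ) :
    ∑ r ∈ Icc 1 J, ‖∑ s ∈ Icc 1 J, exp (2 * π * I * (r * s) / J) * b s‖ ≤
      J * √(∑ s ∈ Icc 1 J, ‖b s‖ ^ 2) := by
  have hparseval := sum_norm_sq_sum_mul_of_orthogonal (Icc 1 J) (Icc 1 J)
    (fun r s : ℕ => exp (2 * π * I * ((r : ℂ) * s) / J)) J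
    (fun _ hs _ ht => by rw [sum_exp_mul_conj_exp hs ht, ofReal_natCast]) b
  rw [← Real.sqrt_sq (Nat.cast_nonneg J), ← Real.sqrt_mul (sq_nonneg _)]
  refine Real.le_sqrt_of_sq_le ?_
  calc (∑ r ∈ Icc 1 J, ‖∑ s ∈ Icc 1 J, exp (2 * π * I * (r * s) / J) * b s‖) ^ 2
      ≤ #(Icc 1 J) * ∑ r ∈ Icc 1 J, ‖∑ s ∈ Icc 1 J, exp (2 * π * I * (r * s) / J) * b s‖ ^ 2 :=
        sq_sum_le_card_mul_sum_sq
    _ = (J : ℝ) ^ 2 * ∑ s ∈ Icc 1 J, ‖b s‖ ^ 2 := by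
        rw [hparseval, Nat.card_Icc, Nat.add_sub_cancel]; ring

lemma sum_norm_apply_single_sq_le {ι : Type*} [DecidableEq ι] (p : ℝ≥0∞) [Fact (1 ≤ p)]
    (hp2 : p ≤ 2) (φ : lp (fun _ : ι => ℂ) p →L[ℂ] ℂ) (S : Finset ι) :
    ∑ i ∈ S, ‖φ (lp.single p i 1)‖ ^ 2 ≤ ‖φ‖ ^ 2 * (#S : ℝ) ^ (2 / p.toReal - 1) := by
  have hp : 1 ≤ p.toReal ∧ p.toReal ≤ 2 := by
    have hp_top : p ≠ ∞ := ne_top_of_le_ne_top ENNReal.ofNat_ne_top hp2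
    constructor
    · simpa using ENNReal.toReal_mono hp_top (Fact.out : 1 ≤ p)
    · simpa using ENNReal.toReal_mono ENNReal.ofNat_ne_top hp2
  set b : ι → ℂ := fun i => φ (lp.single p i 1)
  set T := ∑ i ∈ S, ‖b i‖ ^ 2
  have hT0 : 0 ≤ T := by positivity
  set y := ∑ i ∈ S, lp.single p i (conj (b i))
  have hφy : φ y = T := by
    simp only [y, T, map_sum, ofReal_sum, ofReal_pow, ← mul_conj', mul_comm (b _)]
    refine sum_congr rfl fun i _ => ?_
    rw [← smul_eq_mul, ← map_smul, ← lp.single_smul, smul_eq_mul, mul_one]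
  have hTy : T ≤ ‖φ‖ * ‖y‖ := by
    simpa [hφy, abs_of_nonneg hT0] using φ.le_opNorm y
  have hy : ‖y‖ ^ 2 ≤ (#S : ℝ) ^ (2 / p.toReal - 1) * T := by
    have hnorm := lp.norm_sum_single (by linarith) (fun i => conj (b i)) S
    simp only [RCLike.norm_conj] at hnorm
    calc ‖y‖ ^ 2 = (‖y‖ ^ p.toReal) ^ (2 / p.toReal) := by
          rw [← Real.rpow_mul (norm_nonneg y), mul_div_cancel₀ _ (by linarith),
            Real.rpow_two]
      _ ≤ (#S : ℝ) ^ (2 / p.toReal - 1) * ∑ i ∈ S, (‖b i‖ ^ p.toReal) ^ (2 / p.toReal) := by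
          rw [hnorm]
          exact Real.rpow_sum_le_const_mul_sum_rpow_of_nonneg S
            ((one_le_div₀ (by linarith)).mpr hp.2) fun i _ => by positivity
      _ = (#S : ℝ) ^ (2 / p.toReal - 1) * T := by
          congr 1
          refine sum_congr rfl fun i _ => ?_
          rw [← Real.rpow_mul (norm_nonneg _), mul_div_cancel₀ _ (by linarith), Real.rpow_two]
  have hT2 : T * T ≤ (‖φ‖ ^ 2 * (#S : ℝ) ^ (2 / p.toReal - 1)) * T :=
    calc T * T ≤ (‖φ‖ * ‖y‖) ^ 2 := by rw [← sq]; gcongr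
      _ = ‖φ‖ ^ 2 * ‖y‖ ^ 2 := mul_pow _ _ _
      _ ≤ (‖φ‖ ^ 2 * (#S : ℝ) ^ (2 / p.toReal - 1)) * T := by rw [mul_assoc]; gcongr
  rcases hT0.eq_or_lt with hT | hT
  · rw [← hT]; positivity
  · exact le_of_mul_le_mul_right hT2 hT

lemma rpow_neg_add_mul_mul_sqrt_rpow {J : ℝ} (hJ : 0 < J) (x ε : ℝ) :
    J ^ (-(1 / 2 + 1 / x + ε)) * (J * √(J ^ (2 / x - 1))) = J ^ (-ε) := by
  rw [Real.sqrt_eq_rpow, ← Real.rpow_mul hJ.le, mul_comm J, ← Real.rpow_add_one hJ.ne',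
    ← Real.rpow_add hJ]
  ring_nf

lemma pow_mul_pred_rpow_neg_inv {a : ℝ} (ha : 0 < a) {k : ℕ} (hk : 0 < k) :
    (a ^ (k * (k - 1))) ^ (-(1 / (k : ℝ))) = a ^ ((1 : ℤ) - k) := by
  rw [← Real.rpow_natCast, ← Real.rpow_mul ha.le, ← Real.rpow_intCast]
  congr 1
  push_cast [Nat.cast_sub hk]
  field_simp
  ring

lemma sum_Icc_sub_add_one {M : Type*} [AddCommMonoid M] {J : ℕ} (hJ : 0 < J) (f : ℕ → M) :
    ∑ j ∈ Icc J (2 * J - 1), f (j - J + 1) = ∑ r ∈ Icc 1 J, f r := by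
  refine sum_nbij' (fun j => j - J + 1) (fun r => r + J - 1) ?_ ?_ ?_ ?_ fun _ _ => rfl <;>
    intro a ha <;> simp only [mem_Icc] at ha ⊢ <;> omega

/-- **The block estimate (2.7).**
Let `p ∈ [1,2]`, `α ≥ 2` an integer, `j_k = α^{k(k-1)}` and
`x⁽ʲ⁾ = j_k^{-(1/2+1/p+1/k)} ∑_{s=1}^{j_k} exp(2πi·rs/j_k) e_{j_k+s-1}`
for `j_k ≤ j ≤ 2j_k - 1`, `r = j - j_k + 1`.  Then for every `k ≥ 1` and every
norm-one functional `φ` on `ℓ_p(ℂ)`, `∑_{j=j_k}^{2j_k-1} |φ(x⁽ʲ⁾)| ≤ α^{1-k}`. -/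
theorem macphail_block_dual_estimate
    (p : ℝ≥0∞) [Fact (1 ≤ p)] (hp2 : p ≤ 2)
    (α : ℕ) (hα : 2 ≤ α) (k : ℕ) (hk : 0 < k)
    (φ : lp (fun _ : ℕ => ℂ) p →L[ℂ] ℂ) (hφ : ‖φ‖ ≤ 1) :
    ∑ j ∈ Finset.Icc (α ^ (k * (k - 1))) (2 * α ^ (k * (k - 1)) - 1),
        ‖φ (((α ^ (k * (k - 1)) : ℝ) ^ (-(1 / 2 + 1 / p.toReal + 1 / (k : ℝ)))) •
          ∑ s ∈ Finset.Icc 1 (α ^ (k * (k - 1))),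
            Complex.exp (2 * Real.pi * Complex.I *
                (((j - α ^ (k * (k - 1)) + 1 : ℕ) : ℂ) * (s : ℂ)) /
                  ((α : ℂ) ^ (k * (k - 1)))) •
              lp.single p (α ^ (k * (k - 1)) + s - 1) (1 : ℂ))‖ ≤
      (α : ℝ) ^ ((1 : ℤ) - (k : ℤ)) := by
  simp only [← Nat.cast_pow]
  set J := α ^ (k * (k - 1))
  have hJ0 : 0 < J := by positivity
  set C : ℝ := (J : ℝ) ^ (-(1 / 2 + 1 / p.toReal + 1 / (k : ℝ)))
  set b : ℕ → ℂ := fun n => φ (lp.single p n 1)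
  have hterm : ∀ j, ‖φ (C • ∑ s ∈ Icc 1 J,
        exp (2 * π * I * (((j - J + 1 : ℕ) : ℂ) * s) / J) • lp.single p (J + s - 1) (1 : ℂ))‖ =
      C * ‖∑ s ∈ Icc 1 J, exp (2 * π * I * (((j - J + 1 : ℕ) : ℂ) * s) / J) * b (J + s - 1)‖ := by
    intro j
    rw [φ.map_smul_of_tower, norm_smul, map_sum, Real.norm_of_nonneg (by positivity)]
    simp only [map_smul, smul_eq_mul, b]
  have hdual : ∑ s ∈ Icc 1 J, ‖b (J + s - 1)‖ ^ 2 ≤ (J : ℝ) ^ (2 / p.toReal - 1) := by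
    have hinj : Set.InjOn (fun s => J + s - 1) (Icc 1 J) := fun s hs t ht h => by
      simp only [coe_Icc, Set.mem_Icc] at hs ht h; omega
    have h := sum_norm_apply_single_sq_le p hp2 φ ((Icc 1 J).image fun s => J + s - 1)
    rw [sum_image hinj, card_image_of_injOn hinj, Nat.card_Icc, Nat.add_sub_cancel] at h
    exact h.trans (mul_le_of_le_one_left (by positivity) (pow_le_one₀ (norm_nonneg φ) hφ))
  calc _ = C * ∑ r ∈ Icc 1 J, ‖∑ s ∈ Icc 1 J, exp (2 * π * I * (r * s) / J) * b (J + s - 1)‖ := by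
        simp_rw [hterm, ← mul_sum]
        rw [sum_Icc_sub_add_one hJ0 fun r : ℕ =>
          ‖∑ s ∈ Icc 1 J, exp (2 * π * I * ((r : ℂ) * s) / J) * b (J + s - 1)‖]
    _ ≤ C * (J * √((J : ℝ) ^ (2 / p.toReal - 1))) := by
        gcongr
        exact (sum_norm_sum_exp_mul_le J _).trans (by gcongr)
    _ = (α : ℝ) ^ ((1 : ℤ) - (k : ℤ)) := by
        rw [rpow_neg_add_mul_mul_sqrt_rpow (by positivity), Nat.cast_pow,
          pow_mul_pred_rpow_neg_inv (by positivity) hk]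
end

section
/- Let α ≥ 2 be an integer and, for each positive integer j, let A_j = [1/2 + √(1/4 + log_α((j+1)/2)), 1/2 + √(1/4 + log_α j)] ∩ ℕ. Then: (a) the interval [1/2 + √(1/4 + log_α((j+1)/2)), 1/2 + √(1/4 + log_α j)] has length strictly less than 1, so A_j contains at most one integer; and (b) for positive integers j and k, one has k ∈ A_j if and only if α^{k(k−1)} ≤ j ≤ 2α^{k(k−1)} − 1. In particular, A_j = {k} if j ∈ {α^{k(k−1)}, α^{k(k−1)}+1, …, 2α^{k(k−1)} − 1} for some positive integer k, and A_j = ∅ otherwise. -/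
open scoped Real

lemma key_aux (α : ℕ) (hα : 2 ≤ α) (x : ℝ) (hx : 1 ≤ x) (k : ℕ) (hk : 1 ≤ k) :
    ((k : ℝ) ≤ 1 / 2 + Real.sqrt (1 / 4 + Real.logb α x) ↔ (α : ℝ) ^ (k * (k - 1)) ≤ x) ∧
    (1 / 2 + Real.sqrt (1 / 4 + Real.logb α x) ≤ (k : ℝ) ↔ x ≤ (α : ℝ) ^ (k * (k - 1))) := by
  have hb : (1 : ℝ) < α := by exact_mod_cast Nat.lt_of_lt_of_le one_lt_two hα
  have hxpos : (0 : ℝ) < x := lt_of_lt_of_le one_pos hx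
  have hlog : 0 ≤ Real.logb α x := Real.logb_nonneg hb hx
  obtain ⟨m, rfl⟩ : ∃ m, k = m + 1 := ⟨k - 1, by omega⟩
  have hcast : (m + 1) * (m + 1 - 1) = (m + 1) * m := by rw [Nat.add_sub_cancel]
  rw [hcast]
  have hsq : (((m : ℝ) + 1) - 1 / 2) ^ 2 = (((m + 1) * m : ℕ) : ℝ) + 1 / 4 := by
    push_cast; ring
  have hnn : (0 : ℝ) ≤ ((m : ℝ) + 1) - 1 / 2 := by
    have : (0 : ℝ) ≤ (m : ℝ) := Nat.cast_nonneg m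
    linarith
  have hrp : (α : ℝ) ^ (((m + 1) * m : ℕ) : ℝ) = (α : ℝ) ^ ((m + 1) * m) := by
    rw [Real.rpow_natCast]
  constructor
  · rw [show ((m + 1 : ℕ) : ℝ) ≤ 1 / 2 + Real.sqrt (1 / 4 + Real.logb α x) ↔
        ((m : ℝ) + 1) - 1 / 2 ≤ Real.sqrt (1 / 4 + Real.logb α x) by push_cast; constructor <;> intro <;> linarith]
    rw [Real.le_sqrt hnn (by linarith), hsq, ← hrp,
      ← Real.le_logb_iff_rpow_le hb hxpos]
    constructor <;> intro <;> linarith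
  · rw [show 1 / 2 + Real.sqrt (1 / 4 + Real.logb α x) ≤ ((m + 1 : ℕ) : ℝ) ↔
        Real.sqrt (1 / 4 + Real.logb α x) ≤ ((m : ℝ) + 1) - 1 / 2 by push_cast; constructor <;> intro <;> linarith]
    rw [Real.sqrt_le_iff, hsq, ← hrp, ← Real.logb_le_iff_le_rpow hb hxpos]
    constructor
    · rintro ⟨-, h⟩; linarith
    · intro h; exact ⟨hnn, by linarith⟩

/-- **Characterization of the index sets `A_j`.**
Let `α ≥ 2` be an integer and, for a positive integer `j`, let
`A_j = [1/2 + √(1/4 + log_α((j+1)/2)), 1/2 + √(1/4 + log_α j)] ∩ ℕ`.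
Then (a) the interval has length `< 1` (so `A_j` has at most one element), and
(b) a positive integer `k` belongs to `A_j` iff `α^{k(k-1)} ≤ j ≤ 2α^{k(k-1)} - 1`. -/
theorem indexSet_length_lt_one_and_mem_iff
    (α : ℕ) (hα : 2 ≤ α) (j : ℕ) (hj : 1 ≤ j) :
    ((1 / 2 + Real.sqrt (1 / 4 + Real.logb α j)) -
        (1 / 2 + Real.sqrt (1 / 4 + Real.logb α (((j : ℝ) + 1) / 2))) < 1) ∧
    ({k : ℕ | 1 / 2 + Real.sqrt (1 / 4 + Real.logb α (((j : ℝ) + 1) / 2)) ≤ (k : ℝ) ∧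
        (k : ℝ) ≤ 1 / 2 + Real.sqrt (1 / 4 + Real.logb α j)}.Subsingleton) ∧
    (∀ k : ℕ, 1 ≤ k →
      ((1 / 2 + Real.sqrt (1 / 4 + Real.logb α (((j : ℝ) + 1) / 2)) ≤ (k : ℝ) ∧
          (k : ℝ) ≤ 1 / 2 + Real.sqrt (1 / 4 + Real.logb α j)) ↔
        (α ^ (k * (k - 1)) ≤ j ∧ j ≤ 2 * α ^ (k * (k - 1)) - 1))) := by
  have hb : (1 : ℝ) < α := by exact_mod_cast Nat.lt_of_lt_of_le one_lt_two hα
  have hj1 : (1 : ℝ) ≤ (j : ℝ) := by exact_mod_cast hj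
  have hy1 : (1 : ℝ) ≤ ((j : ℝ) + 1) / 2 := by linarith
  have hlen : (1 / 2 + Real.sqrt (1 / 4 + Real.logb α j)) -
      (1 / 2 + Real.sqrt (1 / 4 + Real.logb α (((j : ℝ) + 1) / 2))) < 1 := by
    set b := 1 / 4 + Real.logb α (((j : ℝ) + 1) / 2) with hbdef
    have hbnn : (0 : ℝ) ≤ b := by
      have := Real.logb_nonneg hb hy1; rw [hbdef]; linarith
    have hab : 1 / 4 + Real.logb α (j : ℝ) < b + 1 := by
      have h1 : Real.logb α (j : ℝ) < Real.logb α ((((j : ℝ) + 1) / 2) * α) := by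
        apply Real.logb_lt_logb hb (by linarith)
        nlinarith [mul_nonneg (by linarith : (0:ℝ) ≤ ((j:ℝ)+1)/2) (by exact_mod_cast sub_nonneg.mpr (show (2:ℝ) ≤ (α:ℝ) by exact_mod_cast hα) : (0:ℝ) ≤ (α:ℝ)-2)]
      have h2 : Real.logb α ((((j : ℝ) + 1) / 2) * α) =
          Real.logb α (((j : ℝ) + 1) / 2) + 1 := by
        rw [Real.logb_mul (by positivity) (by positivity), Real.logb_self_eq_one hb]
      rw [hbdef]; rw [h2] at h1; linarith
    have hs : Real.sqrt (1 / 4 + Real.logb α (j : ℝ)) < Real.sqrt b + 1 := by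
      have h3 : Real.sqrt (1 / 4 + Real.logb α (j : ℝ)) < Real.sqrt (b + 1) := by
        apply Real.sqrt_lt_sqrt _ hab
        have := Real.logb_nonneg hb hj1; linarith
      have h4 : Real.sqrt (b + 1) ≤ Real.sqrt b + 1 := by
        rw [Real.sqrt_le_iff]
        refine ⟨by positivity, ?_⟩
        have := Real.sq_sqrt hbnn
        have := Real.sqrt_nonneg b
        nlinarith
      linarith
    linarith
  refine ⟨hlen, ?_, ?_⟩
  · intro k1 hk1 k2 hk2
    simp only [Set.mem_setOf_eq] at hk1 hk2
    have a1 : (k1 : ℝ) < (k2 : ℝ) + 1 := by linarith [hk1.1, hk1.2, hk2.1, hk2.2]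
    have a2 : (k2 : ℝ) < (k1 : ℝ) + 1 := by linarith [hk1.1, hk1.2, hk2.1, hk2.2]
    have b1 : k1 < k2 + 1 := by exact_mod_cast a1
    have b2 : k2 < k1 + 1 := by exact_mod_cast a2
    omega
  · intro k hk
    have K1 := key_aux α hα ((j : ℝ) + 1) (by linarith) k hk
    have Hj := key_aux α hα (j : ℝ) hj1 k hk
    have Hy := key_aux α hα (((j : ℝ) + 1) / 2) hy1 k hk
    have hpow : (1 : ℕ) ≤ α ^ (k * (k - 1)) := Nat.one_le_pow _ _ (by omega)
    constructor
    · rintro ⟨h1, h2⟩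
      have g1 : ((j : ℝ) + 1) / 2 ≤ (α : ℝ) ^ (k * (k - 1)) := Hy.2.mp h1
      have g2 : (α : ℝ) ^ (k * (k - 1)) ≤ (j : ℝ) := Hj.1.mp h2
      constructor
      · exact_mod_cast g2
      · have : (j : ℝ) + 1 ≤ 2 * (α : ℝ) ^ (k * (k - 1)) := by linarith
        have : (j : ℕ) + 1 ≤ 2 * α ^ (k * (k - 1)) := by exact_mod_cast this
        omega
    · rintro ⟨h1, h2⟩
      have g2 : (α : ℝ) ^ (k * (k - 1)) ≤ (j : ℝ) := by exact_mod_cast h1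
      have h2' : (j : ℕ) + 1 ≤ 2 * α ^ (k * (k - 1)) := by omega
      have g1 : ((j : ℝ) + 1) / 2 ≤ (α : ℝ) ^ (k * (k - 1)) := by
        have : ((j : ℝ)) + 1 ≤ 2 * (α : ℝ) ^ (k * (k - 1)) := by exact_mod_cast h2'
        linarith
      exact ⟨Hy.2.mpr g1, Hj.1.mpr g2⟩
end
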